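/- arXiv:2006.14398 — 5 statements merged into one kernel-verified Lean document; each statement's English description precedes it below -/
import Mathlib

section
/- For every k in (0,1), the function f(k) := (2-k^2) E(k) - 2(1-k^2) K(k) is strictly positive. -/
open Real

/-- Complete elliptic integral of the first kind. -/
noncomputable def ellipticK (k : ℝ) : ℝ :=
  ∫ θ in (0:ℝ)..(Real.pi/2), 1 / Real.sqrt (1 - k^2 * Real.sin θ ^ 2)

/-- Complete elliptic integral of the second kind. -/
noncomputable def ellipticE (k : ℝ) : ℝ :=
  ∫ θ in (0:ℝ)..(Real.pi/2), Real.sqrt (1 - k^2 * Real.sin θ ^ 2)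

theorem f_positive' (k : ℝ) (hk0 : 0 < k) (hk1 : k < 1) :
    0 < (2 - k^2) * (∫ θ in (0:ℝ)..(Real.pi/2), Real.sqrt (1 - k^2 * Real.sin θ ^ 2))
      - 2 * (1 - k^2) * (∫ θ in (0:ℝ)..(Real.pi/2), 1 / Real.sqrt (1 - k^2 * Real.sin θ ^ 2)) := by
  have hk2 : k^2 < 1 := by nlinarith
  have hu : ∀ θ : ℝ, 0 < 1 - k^2 * sin θ ^ 2 := fun θ => by
    nlinarith [sin_sq_le_one θ, sq_nonneg (k * sin θ), sq_nonneg k]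
  have hr : ∀ θ : ℝ, 0 < Real.sqrt (1 - k^2 * sin θ ^ 2) := fun θ => Real.sqrt_pos.2 (hu θ)
  set h : ℝ → ℝ := fun θ => k^4 * (1 - k^2) * sin θ ^ 4 / Real.sqrt (1 - k^2 * sin θ ^ 2) ^ 3 with hh
  set F : ℝ → ℝ := fun θ =>
    (2 - k^2) * Real.sqrt (1 - k^2 * sin θ ^ 2)
      - 2 * (1 - k^2) * (1 / Real.sqrt (1 - k^2 * sin θ ^ 2)) - h θ with hF
  set g : ℝ → ℝ := fun θ => k^2 * (sin θ * cos θ) / Real.sqrt (1 - k^2 * sin θ ^ 2) with hg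
  -- continuity facts
  have hcu : Continuous fun θ : ℝ => 1 - k^2 * sin θ ^ 2 := by continuity
  have hcr : Continuous fun θ : ℝ => Real.sqrt (1 - k^2 * sin θ ^ 2) := hcu.sqrt
  have hc1 : Continuous fun θ : ℝ => 1 / Real.sqrt (1 - k^2 * sin θ ^ 2) :=
    continuous_const.div hcr fun θ => (hr θ).ne'
  have hch : Continuous h := by
    apply Continuous.div (by continuity) (by continuity)
    exact fun θ => pow_ne_zero 3 (hr θ).ne'
  have hcF : Continuous F :=
    (((continuous_const.mul hcr)).sub (continuous_const.mul hc1)).sub hch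
  -- derivative
  have hderiv : ∀ θ : ℝ, HasDerivAt g (F θ) θ := by
    intro θ
    have hd1 : HasDerivAt (fun θ : ℝ => k^2 * (sin θ * cos θ))
        (k^2 * (cos θ * cos θ + sin θ * (-sin θ))) θ :=
      ((Real.hasDerivAt_sin θ).mul (Real.hasDerivAt_cos θ)).const_mul (k^2)
    have hd2 : HasDerivAt (fun θ : ℝ => 1 - k^2 * sin θ ^ 2)
        (-(k^2 * (2 * sin θ ^ 1 * cos θ))) θ := by
      simpa using (((Real.hasDerivAt_sin θ).pow 2).const_mul (k^2)).const_sub 1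
    have hd3 : HasDerivAt (fun θ : ℝ => Real.sqrt (1 - k^2 * sin θ ^ 2))
        (1 / (2 * Real.sqrt (1 - k^2 * sin θ ^ 2)) * (-(k^2 * (2 * sin θ ^ 1 * cos θ)))) θ :=
      (Real.hasDerivAt_sqrt (hu θ).ne').comp θ hd2
    have hd := hd1.div hd3 (hr θ).ne'
    refine hd.congr_deriv ?_
    have hsq : Real.sqrt (1 - k^2 * sin θ ^ 2) ^ 2 = 1 - k^2 * sin θ ^ 2 :=
      Real.sq_sqrt (hu θ).le
    have hc2 : cos θ ^ 2 = 1 - sin θ ^ 2 := Real.cos_sq' θ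
    set r := Real.sqrt (1 - k^2 * sin θ ^ 2) with hrdef
    have hrne : r ≠ 0 := (hr θ).ne'
    have e1 : F θ = ((2 - k^2) * r^4 - 2 * (1 - k^2) * r^2 - k^4 * (1 - k^2) * sin θ ^ 4) / r^3 := by
      simp only [hF, hh, ← hrdef]
      field_simp
    have e2 : (k ^ 2 * (cos θ * cos θ + sin θ * -sin θ) * r -
        k ^ 2 * (sin θ * cos θ) * (1 / (2 * r) * -(k ^ 2 * (2 * sin θ ^ 1 * cos θ)))) / r ^ 2
        = (k^2 * (cos θ ^ 2 - sin θ ^ 2) * r^2 + k^4 * sin θ ^ 2 * cos θ ^ 2) / r^3 := by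
      field_simp
      ring
    rw [e1, e2]
    congr 1
    have h4 : r^4 = (1 - k^2 * sin θ ^ 2)^2 := by rw [← hsq]; ring
    rw [h4, hsq, hc2]
    ring
  -- integrability
  have hiF : IntervalIntegrable F MeasureTheory.volume 0 (Real.pi/2) :=
    hcF.intervalIntegrable _ _
  have hih : IntervalIntegrable h MeasureTheory.volume 0 (Real.pi/2) :=
    hch.intervalIntegrable _ _
  -- ∫ F = 0
  have hFint : (∫ θ in (0:ℝ)..(Real.pi/2), F θ) = 0 := by
    rw [intervalIntegral.integral_eq_sub_of_hasDerivAt (fun θ _ => hderiv θ) hiF]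
    simp [hg]
  -- ∫ h > 0
  have hhpos : 0 < ∫ θ in (0:ℝ)..(Real.pi/2), h θ := by
    apply intervalIntegral.intervalIntegral_pos_of_pos_on hih _ (by positivity)
    intro θ hθ
    have hs : 0 < sin θ := Real.sin_pos_of_pos_of_lt_pi hθ.1 (lt_trans hθ.2 (by linarith [Real.pi_pos]))
    have := hr θ
    simp only [hh]
    have h1k : (0:ℝ) < 1 - k^2 := by linarith
    exact div_pos (mul_pos (mul_pos (by positivity) h1k) (by positivity)) (by positivity)
  -- assemble
  have key : (∫ θ in (0:ℝ)..(Real.pi/2),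
      ((2 - k^2) * Real.sqrt (1 - k^2 * sin θ ^ 2)
        - 2 * (1 - k^2) * (1 / Real.sqrt (1 - k^2 * sin θ ^ 2))))
      = (∫ θ in (0:ℝ)..(Real.pi/2), F θ) + ∫ θ in (0:ℝ)..(Real.pi/2), h θ := by
    rw [← intervalIntegral.integral_add hiF hih]
    apply intervalIntegral.integral_congr
    intro θ _
    simp only [hF]
    ring
  have lin : (∫ θ in (0:ℝ)..(Real.pi/2),
      ((2 - k^2) * Real.sqrt (1 - k^2 * sin θ ^ 2)
        - 2 * (1 - k^2) * (1 / Real.sqrt (1 - k^2 * sin θ ^ 2))))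
      = (2 - k^2) * (∫ θ in (0:ℝ)..(Real.pi/2), Real.sqrt (1 - k^2 * sin θ ^ 2))
        - 2 * (1 - k^2) * (∫ θ in (0:ℝ)..(Real.pi/2), 1 / Real.sqrt (1 - k^2 * sin θ ^ 2)) := by
    rw [intervalIntegral.integral_sub (f := fun θ => (2 - k^2) * Real.sqrt (1 - k^2 * sin θ ^ 2))
      (g := fun θ => 2 * (1 - k^2) * (1 / Real.sqrt (1 - k^2 * sin θ ^ 2))) ((continuous_const.mul hcr).intervalIntegrable _ _)
      ((continuous_const.mul hc1).intervalIntegrable _ _),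
      intervalIntegral.integral_const_mul, intervalIntegral.integral_const_mul]
  rw [← lin, key, hFint, zero_add]
  exact hhpos

theorem f_positive :
    ∀ k ∈ Set.Ioo (0:ℝ) 1,
      0 < (2 - k^2) * ellipticE k - 2 * (1 - k^2) * ellipticK k := by
  rintro k ⟨hk0, hk1⟩
  simpa [ellipticE, ellipticK] using f_positive' k hk0 hk1
end

section
/- For every k in (0,1), K(k)^2 (1-k^2) - E(k)^2 < 0. -/
open Real

theorem KE_inequality :
    ∀ k ∈ Set.Ioo (0:ℝ) 1,
      ellipticK k ^ 2 * (1 - k^2) - ellipticE k ^ 2 < 0 := by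
  rintro k ⟨hk0, hk1⟩
  set c : ℝ := Real.sqrt (1 - k^2) with hc
  have hk2 : k^2 < 1 := by nlinarith
  have hc2 : c^2 = 1 - k^2 := Real.sq_sqrt (by nlinarith)
  have hcpos : 0 < c := Real.sqrt_pos.2 (by nlinarith)
  have hc1 : c < 1 := by nlinarith [hc2, hcpos]
  -- Δ is positive everywhere
  have hΔ : ∀ θ : ℝ, 0 < 1 - k^2 * Real.sin θ ^ 2 := by
    intro θ
    nlinarith [Real.sin_sq_le_one θ, sq_nonneg (k * Real.sin θ)]
  have hr : ∀ θ : ℝ, 0 < Real.sqrt (1 - k^2 * Real.sin θ ^ 2) :=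
    fun θ => Real.sqrt_pos.2 (hΔ θ)
  have hrsq : ∀ θ : ℝ, Real.sqrt (1 - k^2 * Real.sin θ ^ 2) ^ 2 = 1 - k^2 * Real.sin θ ^ 2 :=
    fun θ => Real.sq_sqrt (hΔ θ).le
  have hΔcont : Continuous (fun θ : ℝ => 1 - k^2 * Real.sin θ ^ 2) := by continuity
  have hrcont : Continuous (fun θ : ℝ => Real.sqrt (1 - k^2 * Real.sin θ ^ 2)) :=
    hΔcont.sqrt
  have hrne : ∀ θ : ℝ, Real.sqrt (1 - k^2 * Real.sin θ ^ 2) ≠ 0 := fun θ => (hr θ).ne'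
  -- the key FTC identity : ∫ (√Δ - (1-k²)/√Δ³) = 0
  have hderiv : ∀ θ : ℝ, HasDerivAt
      (fun θ => k^2 * (Real.sin θ * Real.cos θ) / Real.sqrt (1 - k^2 * Real.sin θ ^ 2))
      (Real.sqrt (1 - k^2 * Real.sin θ ^ 2)
        - (1 - k^2) / Real.sqrt (1 - k^2 * Real.sin θ ^ 2) ^ 3) θ := by
    intro θ
    have h1 : HasDerivAt (fun θ : ℝ => k^2 * (Real.sin θ * Real.cos θ))
        (k^2 * (Real.cos θ * Real.cos θ + Real.sin θ * (-Real.sin θ))) θ :=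
      (((Real.hasDerivAt_sin θ).mul (Real.hasDerivAt_cos θ))).const_mul _
    have h2 : HasDerivAt (fun θ : ℝ => 1 - k^2 * Real.sin θ ^ 2)
        (-(k^2 * (2 * Real.sin θ ^ 1 * Real.cos θ))) θ := by
      simpa using (((Real.hasDerivAt_sin θ).pow 2).const_mul (k^2)).const_sub 1
    have h3 := h2.sqrt (hΔ θ).ne'
    have h4 := h1.div h3 (hrne θ)
    refine h4.congr_deriv (Eq.symm ?_)
    have hrs := hrsq θ
    have hsc : Real.sin θ ^ 2 + Real.cos θ ^ 2 = 1 := Real.sin_sq_add_cos_sq θ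
    set r := Real.sqrt (1 - k^2 * Real.sin θ ^ 2) with hrdef
    have hrne' : r ≠ 0 := hrne θ
    field_simp
    linear_combination (r^2 + 1 - k^2*Real.cos θ^2) * hrs
      + (-k^2) * hsc
  have hpi : (0:ℝ) < π/2 := by positivity
  -- continuity facts
  have hcont3 : Continuous (fun θ : ℝ => (1 - k^2) / Real.sqrt (1 - k^2 * Real.sin θ ^ 2) ^ 3) :=
    continuous_const.div (hrcont.pow 3) (fun θ => pow_ne_zero 3 (hrne θ))
  have hcontK : Continuous (fun θ : ℝ => 1 / Real.sqrt (1 - k^2 * Real.sin θ ^ 2)) :=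
    continuous_const.div hrcont hrne
  -- FTC identity
  have hFTC : (∫ θ in (0:ℝ)..(π/2),
      (Real.sqrt (1 - k^2 * Real.sin θ ^ 2)
        - (1 - k^2) / Real.sqrt (1 - k^2 * Real.sin θ ^ 2) ^ 3)) = 0 := by
    rw [intervalIntegral.integral_eq_sub_of_hasDerivAt (fun θ _ => hderiv θ)
      ((hrcont.sub hcont3).intervalIntegrable 0 (π/2))]
    simp
  have hEid : (∫ θ in (0:ℝ)..(π/2),
      (1 - k^2) / Real.sqrt (1 - k^2 * Real.sin θ ^ 2) ^ 3) = ellipticE k := by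
    rw [intervalIntegral.integral_sub (hrcont.intervalIntegrable (0:ℝ) (π/2))
      (hcont3.intervalIntegrable (0:ℝ) (π/2))] at hFTC
    rw [ellipticE]
    linarith
  -- strict pointwise inequality integrated
  have hlt : (∫ θ in (0:ℝ)..(π/2), 2 * c * (1 / Real.sqrt (1 - k^2 * Real.sin θ ^ 2)))
      < ∫ θ in (0:ℝ)..(π/2), (Real.sqrt (1 - k^2 * Real.sin θ ^ 2)
        + (1 - k^2) / Real.sqrt (1 - k^2 * Real.sin θ ^ 2) ^ 3) := by
    apply intervalIntegral.integral_lt_integral_of_continuousOn_of_le_of_exists_lt hpi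
      ((continuous_const.mul hcontK).continuousOn) ((hrcont.add hcont3).continuousOn)
    · intro x _
      simp only [Pi.add_apply, Pi.mul_apply]
      set r := Real.sqrt (1 - k^2 * Real.sin x ^ 2) with hrdef
      have hr0 : 0 < r := hr x
      have hrs : r ^ 2 = 1 - k^2 * Real.sin x ^ 2 := hrsq x
      have key : r + (1 - k^2) / r^3 - 2 * c * (1/r) = (r^2 - c)^2 / r^3 := by
        field_simp
        linear_combination (-1) * hc2
      nlinarith [div_nonneg (sq_nonneg (r^2 - c)) (pow_pos hr0 3).le]
    · refine ⟨0, ⟨le_refl 0, hpi.le⟩, ?_⟩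
      simp only [Pi.add_apply, Pi.mul_apply, Real.sin_zero]
      norm_num
      have h1 : 0 < (1 - c)^2 := pow_pos (by linarith) 2
      nlinarith [hc2]
  -- conclude
  have hKval : (∫ θ in (0:ℝ)..(π/2), 2 * c * (1 / Real.sqrt (1 - k^2 * Real.sin θ ^ 2)))
      = 2 * c * ellipticK k := by
    rw [ellipticK, ← intervalIntegral.integral_const_mul]
  have hEval : (∫ θ in (0:ℝ)..(π/2), (Real.sqrt (1 - k^2 * Real.sin θ ^ 2)
      + (1 - k^2) / Real.sqrt (1 - k^2 * Real.sin θ ^ 2) ^ 3)) = 2 * ellipticE k := by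
    rw [intervalIntegral.integral_add (hrcont.intervalIntegrable _ _)
      (hcont3.intervalIntegrable _ _), hEid, ellipticE]
    ring
  rw [hKval, hEval] at hlt
  have hK0 : 0 ≤ ellipticK k := by
    rw [ellipticK]
    apply intervalIntegral.integral_nonneg hpi.le
    intro x _
    positivity
  nlinarith [hc2, mul_nonneg hcpos.le hK0, hlt]
end

section
/- For every k in (0,1), (2-k^2) K(k) - 2 E(k) > 0. -/
open Real

set_option maxHeartbeats 1000000 in
theorem KE_positive :
    ∀ k ∈ Set.Ioo (0:ℝ) 1,
      (2 - k^2) * ellipticK k - 2 * ellipticE k > 0 := by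
  rintro k ⟨hk0, hk1⟩
  have hk2 : k ^ 2 < 1 := by nlinarith
  have hk2pos : 0 < k ^ 2 := by positivity
  have hw : ∀ θ : ℝ, 0 < 1 - k ^ 2 * Real.sin θ ^ 2 := by
    intro θ
    nlinarith [Real.sin_sq_le_one θ, sq_nonneg (Real.sin θ)]
  set g : ℝ → ℝ := fun θ => (2 * Real.sin θ ^ 2 - 1) / Real.sqrt (1 - k ^ 2 * Real.sin θ ^ 2)
    with hg
  have hsqrt_pos : ∀ θ : ℝ, 0 < Real.sqrt (1 - k ^ 2 * Real.sin θ ^ 2) := fun θ =>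
    Real.sqrt_pos.mpr (hw θ)
  have hgc : Continuous g := by
    apply Continuous.div (by continuity) (Real.continuous_sqrt.comp (by continuity))
    intro θ; exact (hsqrt_pos θ).ne'
  have hKc : Continuous fun θ => 1 / Real.sqrt (1 - k ^ 2 * Real.sin θ ^ 2) := by
    apply Continuous.div continuous_const (Real.continuous_sqrt.comp (by continuity))
    intro θ; exact (hsqrt_pos θ).ne'
  have hEc : Continuous fun θ => Real.sqrt (1 - k ^ 2 * Real.sin θ ^ 2) :=
    Real.continuous_sqrt.comp (by continuity)
  -- Step 1: rewrite as k^2 * ∫ g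
  have hKE : (2 - k ^ 2) * ellipticK k - 2 * ellipticE k
      = k ^ 2 * ∫ θ in (0:ℝ)..(π/2), g θ := by
    unfold ellipticK ellipticE
    rw [← intervalIntegral.integral_const_mul, ← intervalIntegral.integral_const_mul,
      ← intervalIntegral.integral_sub (f := fun θ => (2 - k ^ 2) * (1 / Real.sqrt (1 - k ^ 2 * Real.sin θ ^ 2))) (g := fun θ => 2 * Real.sqrt (1 - k ^ 2 * Real.sin θ ^ 2))
        ((continuous_const.mul hKc).intervalIntegrable _ _) ((continuous_const.mul hEc).intervalIntegrable _ _),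
      ← intervalIntegral.integral_const_mul]
    apply intervalIntegral.integral_congr
    intro θ _
    have hs := hsqrt_pos θ
    have hsq : Real.sqrt (1 - k ^ 2 * Real.sin θ ^ 2) * Real.sqrt (1 - k ^ 2 * Real.sin θ ^ 2)
        = 1 - k ^ 2 * Real.sin θ ^ 2 := Real.mul_self_sqrt (hw θ).le
    simp only [hg]
    field_simp
    nlinarith [hsq]
  rw [hKE]
  apply mul_pos hk2pos
  -- Step 2: symmetry
  have hsymm : ∫ θ in (0:ℝ)..(π/2), g θ = ∫ θ in (0:ℝ)..(π/2), g (π/2 - θ) := by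
    rw [intervalIntegral.integral_comp_sub_left g (π/2)]
    norm_num
  have hdouble : (2:ℝ) * ∫ θ in (0:ℝ)..(π/2), g θ
      = ∫ θ in (0:ℝ)..(π/2), (g θ + g (π/2 - θ)) := by
    have hgc2 : Continuous fun θ => g (π/2 - θ) := hgc.comp (by continuity)
    rw [intervalIntegral.integral_add (hgc.intervalIntegrable _ _)
      (hgc2.intervalIntegrable _ _), ← hsymm]
    ring
  have key : (0:ℝ) < ∫ θ in (0:ℝ)..(π/2), (g θ + g (π/2 - θ)) := by
    -- pointwise formula
    have hpt : ∀ θ : ℝ, g θ + g (π/2 - θ)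
        = (2 * Real.sin θ ^ 2 - 1) *
          (1 / Real.sqrt (1 - k ^ 2 * Real.sin θ ^ 2)
           - 1 / Real.sqrt (1 - k ^ 2 * Real.cos θ ^ 2)) := by
      intro θ
      have hpyth := Real.sin_sq_add_cos_sq θ
      simp only [hg, Real.sin_pi_div_two_sub]
      have h1 := (hsqrt_pos θ).ne'
      have h2 : Real.sqrt (1 - k ^ 2 * Real.cos θ ^ 2) ≠ 0 := by
        have : 0 < 1 - k ^ 2 * Real.cos θ ^ 2 := by
          nlinarith [Real.cos_sq_le_one θ, sq_nonneg (Real.cos θ)]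
        exact (Real.sqrt_pos.mpr this).ne'
      have : 2 * Real.cos θ ^ 2 - 1 = -(2 * Real.sin θ ^ 2 - 1) := by nlinarith
      rw [this]
      field_simp
      ring
    have hnonneg : ∀ θ ∈ Set.Icc (0:ℝ) (π/4), 0 ≤ g θ + g (π/2 - θ) := by
      rintro θ ⟨h0, h4⟩
      rw [hpt θ]
      have hs1 : Real.sin θ ≤ Real.sqrt 2 / 2 := by
        have := Real.sin_pi_div_four
        calc Real.sin θ ≤ Real.sin (π/4) := by
              apply Real.sin_le_sin_of_le_of_le_pi_div_two (by linarith [Real.pi_pos]) (by linarith [Real.pi_pos]) h4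
          _ = Real.sqrt 2 / 2 := Real.sin_pi_div_four
      have hs0 : 0 ≤ Real.sin θ := Real.sin_nonneg_of_nonneg_of_le_pi h0 (by linarith [Real.pi_pos])
      have hhalf : (Real.sqrt 2 / 2) ^ 2 = 1/2 := by
        rw [div_pow, Real.sq_sqrt (by norm_num : (0:ℝ) ≤ 2)]; norm_num
      have hs2 : Real.sin θ ^ 2 ≤ 1/2 := by
        calc Real.sin θ ^ 2 ≤ (Real.sqrt 2 / 2) ^ 2 := pow_le_pow_left₀ hs0 hs1 2
          _ = 1/2 := hhalf
      have hc2 : 1/2 ≤ Real.cos θ ^ 2 := by nlinarith [Real.sin_sq_add_cos_sq θ]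
      have hAB : 1 - k ^ 2 * Real.cos θ ^ 2 ≤ 1 - k ^ 2 * Real.sin θ ^ 2 := by nlinarith
      have hBpos : 0 < 1 - k ^ 2 * Real.cos θ ^ 2 := by
        nlinarith [Real.cos_sq_le_one θ]
      have hsqle : Real.sqrt (1 - k ^ 2 * Real.cos θ ^ 2) ≤ Real.sqrt (1 - k ^ 2 * Real.sin θ ^ 2) :=
        Real.sqrt_le_sqrt hAB
      have : 1 / Real.sqrt (1 - k ^ 2 * Real.sin θ ^ 2)
          - 1 / Real.sqrt (1 - k ^ 2 * Real.cos θ ^ 2) ≤ 0 := by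
        have := one_div_le_one_div_of_le (Real.sqrt_pos.mpr hBpos) hsqle
        linarith
      have h2s : 2 * Real.sin θ ^ 2 - 1 ≤ 0 := by linarith
      nlinarith [mul_nonneg (neg_nonneg.2 h2s) (neg_nonneg.2 this)]
    have hpos : ∀ θ ∈ Set.Ioo (π/4) (π/2), 0 < g θ + g (π/2 - θ) := by
      rintro θ ⟨h4, h2⟩
      rw [hpt θ]
      have hpi := Real.pi_pos
      have hs1 : Real.sqrt 2 / 2 < Real.sin θ := by
        calc Real.sqrt 2 / 2 = Real.sin (π/4) := Real.sin_pi_div_four.symm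
          _ < Real.sin θ := by
              apply Real.sin_lt_sin_of_lt_of_le_pi_div_two (by linarith) (by linarith) h4
      have hhalf : (Real.sqrt 2 / 2) ^ 2 = 1/2 := by
        rw [div_pow, Real.sq_sqrt (by norm_num : (0:ℝ) ≤ 2)]; norm_num
      have hs2 : 1/2 < Real.sin θ ^ 2 := by
        calc (1:ℝ)/2 = (Real.sqrt 2 / 2) ^ 2 := hhalf.symm
          _ < Real.sin θ ^ 2 := by
              apply pow_lt_pow_left₀ hs1 (by positivity) (by norm_num)
      have hc2 : Real.cos θ ^ 2 < 1/2 := by nlinarith [Real.sin_sq_add_cos_sq θ]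
      have hAB : 1 - k ^ 2 * Real.sin θ ^ 2 < 1 - k ^ 2 * Real.cos θ ^ 2 := by nlinarith
      have hApos : 0 < 1 - k ^ 2 * Real.sin θ ^ 2 := hw θ
      have hsqlt : Real.sqrt (1 - k ^ 2 * Real.sin θ ^ 2) < Real.sqrt (1 - k ^ 2 * Real.cos θ ^ 2) :=
        Real.sqrt_lt_sqrt hApos.le hAB
      have hfac : 0 < 1 / Real.sqrt (1 - k ^ 2 * Real.sin θ ^ 2)
          - 1 / Real.sqrt (1 - k ^ 2 * Real.cos θ ^ 2) := by
        have := one_div_lt_one_div_of_lt (hsqrt_pos θ) hsqlt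
        linarith
      exact mul_pos (by nlinarith) hfac
    have hcont : Continuous fun θ => g θ + g (π/2 - θ) :=
      hgc.add (hgc.comp (continuous_const.sub continuous_id))
    have hpi := Real.pi_pos
    rw [← intervalIntegral.integral_add_adjacent_intervals
      (a := 0) (b := π/4) (c := π/2)
      (hcont.intervalIntegrable _ _) (hcont.intervalIntegrable _ _)]
    have h1 : 0 ≤ ∫ θ in (0:ℝ)..(π/4), (g θ + g (π/2 - θ)) := by
      apply intervalIntegral.integral_nonneg (by linarith)
      intro θ hθ; exact hnonneg θ hθ
    have h2 : 0 < ∫ θ in (π/4:ℝ)..(π/2), (g θ + g (π/2 - θ)) := by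
      apply intervalIntegral.intervalIntegral_pos_of_pos_on
        (hcont.intervalIntegrable _ _) hpos (by linarith)
    linarith
  linarith [hdouble ▸ key]
end

section
/- For k ∈ (0,1), the derivative with respect to k of c(k) := (4/π^2) K(k)^2 (2k^2 - 1) is strictly positive; in particular (π^2/8) c'(k) = (K(k)/(k(1-k^2))) [ (1-k^2)(K(k)-E(k)) + k^2 E(k) ] > 0. -/
open Real

lemma ypos {k : ℝ} (hk : k^2 < 1) (θ : ℝ) : 0 < 1 - k^2 * Real.sin θ ^ 2 := by
  nlinarith [Real.sin_sq_le_one θ, sq_nonneg k,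
    mul_nonneg (sq_nonneg k) (sub_nonneg.2 (Real.sin_sq_le_one θ))]

lemma cont_y {k : ℝ} : Continuous fun θ : ℝ => 1 - k^2 * Real.sin θ ^ 2 := by
  fun_prop

lemma cont_sqrt_y {k : ℝ} : Continuous fun θ : ℝ => Real.sqrt (1 - k^2 * Real.sin θ ^ 2) :=
  Real.continuous_sqrt.comp cont_y

lemma cont_f1 {k : ℝ} (hk : k^2 < 1) :
    Continuous fun θ : ℝ => 1 / Real.sqrt (1 - k^2 * Real.sin θ ^ 2) :=
  continuous_const.div cont_sqrt_y fun θ => (Real.sqrt_pos.2 (ypos hk θ)).ne'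

lemma cont_F' {k : ℝ} (hk : k^2 < 1) :
    Continuous fun θ : ℝ => k * Real.sin θ ^ 2 /
      ((1 - k^2 * Real.sin θ ^ 2) * Real.sqrt (1 - k^2 * Real.sin θ ^ 2)) := by
  apply Continuous.div (by fun_prop) (cont_y.mul cont_sqrt_y)
  intro θ
  exact (mul_pos (ypos hk θ) (Real.sqrt_pos.2 (ypos hk θ))).ne'

lemma cont_g' {k : ℝ} (hk : k^2 < 1) :
    Continuous fun θ : ℝ => (Real.cos θ ^ 2 - Real.sin θ ^ 2) / Real.sqrt (1 - k^2 * Real.sin θ ^ 2)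
      + k^2 * Real.sin θ ^ 2 * Real.cos θ ^ 2 /
        ((1 - k^2 * Real.sin θ ^ 2) * Real.sqrt (1 - k^2 * Real.sin θ ^ 2)) := by
  apply Continuous.add
  · exact Continuous.div (by fun_prop) cont_sqrt_y fun θ => (Real.sqrt_pos.2 (ypos hk θ)).ne'
  · exact Continuous.div (by fun_prop) (cont_y.mul cont_sqrt_y)
      fun θ => (mul_pos (ypos hk θ) (Real.sqrt_pos.2 (ypos hk θ))).ne'

/-- Pointwise derivative in the parameter. -/
lemma hasDerivAt_F (θ : ℝ) {x : ℝ} (hx : x^2 < 1) :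
    HasDerivAt (fun x : ℝ => 1 / Real.sqrt (1 - x^2 * Real.sin θ ^ 2))
      (x * Real.sin θ ^ 2 /
        ((1 - x^2 * Real.sin θ ^ 2) * Real.sqrt (1 - x^2 * Real.sin θ ^ 2))) x := by
  have hy : 0 < 1 - x^2 * Real.sin θ ^ 2 := ypos hx θ
  set s := Real.sin θ ^ 2 with hs
  have h1 : HasDerivAt (fun x : ℝ => 1 - x^2 * s) (-(2 * x * s)) x := by
    have h := ((hasDerivAt_pow 2 x).mul_const s).const_sub 1
    exact h.congr_deriv (by norm_num)
  have hr : Real.sqrt (1 - x^2 * s) ≠ 0 := (Real.sqrt_pos.2 hy).ne'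
  have h2 : HasDerivAt (fun x : ℝ => Real.sqrt (1 - x^2 * s))
      (1 / (2 * Real.sqrt (1 - x^2 * s)) * (-(2 * x * s))) x :=
    (Real.hasDerivAt_sqrt hy.ne').comp x h1
  have h3 := h2.inv hr
  have hsq : Real.sqrt (1 - x^2 * s) ^ 2 = 1 - x^2 * s := Real.sq_sqrt hy.le
  simp only [one_div]
  refine h3.congr_deriv (Eq.symm ?_)
  rw [div_eq_iff (by positivity), ← hsq]
  field_simp
  ring
  simp only [hsq]


/-- Derivative in θ of sin θ cos θ / sqrt(1 - k² sin² θ). -/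
lemma hasDerivAt_g {k : ℝ} (hk : k^2 < 1) (θ : ℝ) :
    HasDerivAt (fun θ : ℝ => Real.sin θ * Real.cos θ / Real.sqrt (1 - k^2 * Real.sin θ ^ 2))
      ((Real.cos θ ^ 2 - Real.sin θ ^ 2) / Real.sqrt (1 - k^2 * Real.sin θ ^ 2)
        + k^2 * Real.sin θ ^ 2 * Real.cos θ ^ 2 /
          ((1 - k^2 * Real.sin θ ^ 2) * Real.sqrt (1 - k^2 * Real.sin θ ^ 2))) θ := by
  have hy : 0 < 1 - k^2 * Real.sin θ ^ 2 := ypos hk θ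
  have hr : Real.sqrt (1 - k^2 * Real.sin θ ^ 2) ≠ 0 := (Real.sqrt_pos.2 hy).ne'
  have hnum : HasDerivAt (fun θ : ℝ => Real.sin θ * Real.cos θ)
      (Real.cos θ * Real.cos θ + Real.sin θ * (-Real.sin θ)) θ :=
    (Real.hasDerivAt_sin θ).mul (Real.hasDerivAt_cos θ)
  have hyθ : HasDerivAt (fun θ : ℝ => 1 - k^2 * Real.sin θ ^ 2)
      (-(k^2 * (2 * Real.sin θ ^ 1 * Real.cos θ))) θ := by
    have h := (((Real.hasDerivAt_sin θ).pow 2).const_mul (k^2)).const_sub 1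
    simpa using h
  have hden : HasDerivAt (fun θ : ℝ => Real.sqrt (1 - k^2 * Real.sin θ ^ 2))
      (1 / (2 * Real.sqrt (1 - k^2 * Real.sin θ ^ 2)) *
        (-(k^2 * (2 * Real.sin θ ^ 1 * Real.cos θ)))) θ :=
    (Real.hasDerivAt_sqrt hy.ne').comp θ hyθ
  have h := hnum.div hden hr
  have hsq : Real.sqrt (1 - k^2 * Real.sin θ ^ 2) ^ 2 = 1 - k^2 * Real.sin θ ^ 2 :=
    Real.sq_sqrt hy.le
  set r := Real.sqrt (1 - k^2 * Real.sin θ ^ 2) with hrdef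
  refine h.congr_deriv (Eq.symm ?_)
  rw [← hsq]
  field_simp
  ring

/-- The key algebraic identity. -/
lemma key_id {k s r : ℝ} (hk : k ≠ 0) (hk1 : 1 - k^2 ≠ 0) (hr : r ≠ 0)
    (hy : r^2 = 1 - k^2 * s) :
    k * s / ((1 - k^2 * s) * r) =
      (-1/k) * (1/r) + (1/(k*(1-k^2))) * r
        + (-(k/(1-k^2))) * (((1-s) - s)/r + k^2 * s * (1-s) / ((1 - k^2*s) * r)) := by
  have hs : s = (1 - r^2)/k^2 := by rw [hy]; field_simp; ring
  rw [hs]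
  field_simp
  ring


lemma integral_g' {k : ℝ} (hk : k^2 < 1) :
    (∫ θ in (0:ℝ)..(Real.pi/2),
      ((Real.cos θ ^ 2 - Real.sin θ ^ 2) / Real.sqrt (1 - k^2 * Real.sin θ ^ 2)
        + k^2 * Real.sin θ ^ 2 * Real.cos θ ^ 2 /
          ((1 - k^2 * Real.sin θ ^ 2) * Real.sqrt (1 - k^2 * Real.sin θ ^ 2)))) = 0 := by
  have h := intervalIntegral.integral_eq_sub_of_hasDerivAt
    (f := fun θ : ℝ => Real.sin θ * Real.cos θ / Real.sqrt (1 - k^2 * Real.sin θ ^ 2))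
    (a := (0:ℝ)) (b := Real.pi/2)
    (fun θ _ => hasDerivAt_g hk θ) ((cont_g' hk).intervalIntegrable _ _)
  rw [h]
  simp [Real.cos_pi_div_two]

/-- Derivative of ellipticK. -/
lemma hasDerivAt_ellipticK {k : ℝ} (hk0 : 0 < k) (hk1 : k < 1) :
    HasDerivAt ellipticK
      ((1/(k*(1-k^2))) * ellipticE k - (1/k) * ellipticK k) k := by
  have hksq : k^2 < 1 := by nlinarith
  set a : ℝ := (1 + k) / 2 with ha
  have ha1 : a < 1 := by simp only [ha]; linarith
  have ha0 : 0 < a := by simp only [ha]; linarith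
  set ε : ℝ := (1 - k) / 2 with hε
  have hε0 : 0 < ε := by simp only [hε]; linarith
  have hball : ∀ x ∈ Metric.ball k ε, |x| < a := by
    intro x hx
    rw [Metric.mem_ball, Real.dist_eq] at hx
    rw [abs_lt] at hx ⊢
    constructor <;> [skip; skip] <;> simp only [ha, hε] at * <;> cases' hx with h1 h2 <;> linarith
  have hxsq : ∀ x ∈ Metric.ball k ε, x^2 < 1 := by
    intro x hx
    have := hball x hx
    nlinarith [abs_nonneg x, sq_abs x]
  -- the bound
  set C : ℝ := 1 / ((1 - a^2) * Real.sqrt (1 - a^2)) with hC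
  have ha2 : 0 < 1 - a^2 := by nlinarith
  have hboundC : ∀ θ : ℝ, ∀ x ∈ Metric.ball k ε,
      ‖x * Real.sin θ ^ 2 / ((1 - x^2 * Real.sin θ ^ 2) * Real.sqrt (1 - x^2 * Real.sin θ ^ 2))‖
        ≤ C := by
    intro θ x hx
    have hxa := hball x hx
    have hx1 := hxsq x hx
    have hy : 0 < 1 - x^2 * Real.sin θ ^ 2 := ypos hx1 θ
    have hylb : 1 - a^2 ≤ 1 - x^2 * Real.sin θ ^ 2 := by
      nlinarith [Real.sin_sq_le_one θ, sq_abs x, sq_nonneg (Real.sin θ), abs_nonneg x,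
        mul_le_mul_of_nonneg_left (Real.sin_sq_le_one θ) (sq_nonneg x)]
    have hrlb : Real.sqrt (1 - a^2) ≤ Real.sqrt (1 - x^2 * Real.sin θ ^ 2) :=
      Real.sqrt_le_sqrt hylb
    have hrpos : 0 < Real.sqrt (1 - a^2) := Real.sqrt_pos.2 ha2
    rw [Real.norm_eq_abs, abs_div, abs_of_pos (mul_pos hy (Real.sqrt_pos.2 hy))]
    rw [hC]
    apply div_le_div₀ (by positivity) ?_ (by positivity) ?_
    · rw [abs_mul, abs_of_nonneg (sq_nonneg (Real.sin θ))]
      calc |x| * Real.sin θ ^ 2 ≤ 1 * 1 := by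
            apply mul_le_mul (by nlinarith [abs_nonneg x]) (Real.sin_sq_le_one θ)
              (sq_nonneg _) zero_le_one
        _ = 1 := one_mul 1
    · exact mul_le_mul hylb hrlb hrpos.le hy.le
  have key := intervalIntegral.hasDerivAt_integral_of_dominated_loc_of_deriv_le
    (F := fun x θ => 1 / Real.sqrt (1 - x^2 * Real.sin θ ^ 2))
    (F' := fun x θ => x * Real.sin θ ^ 2 /
      ((1 - x^2 * Real.sin θ ^ 2) * Real.sqrt (1 - x^2 * Real.sin θ ^ 2)))
    (x₀ := k) (a := (0:ℝ)) (b := Real.pi/2) (bound := fun _ => C) (μ := MeasureTheory.volume)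
    (Metric.ball_mem_nhds k hε0)
    (by
      filter_upwards [Metric.ball_mem_nhds k hε0] with x hx
      exact ((cont_f1 (hxsq x hx)).aestronglyMeasurable).restrict)
    ((cont_f1 hksq).intervalIntegrable _ _)
    (((cont_F' hksq).aestronglyMeasurable).restrict)
    (MeasureTheory.ae_of_all _ fun θ _ x hx => hboundC θ x hx)
    (intervalIntegrable_const)
    (MeasureTheory.ae_of_all _ fun θ _ x hx => hasDerivAt_F θ (hxsq x hx))
  have hK : HasDerivAt (fun x => ∫ θ in (0:ℝ)..(Real.pi/2),
      1 / Real.sqrt (1 - x^2 * Real.sin θ ^ 2))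
      (∫ θ in (0:ℝ)..(Real.pi/2), k * Real.sin θ ^ 2 /
        ((1 - k^2 * Real.sin θ ^ 2) * Real.sqrt (1 - k^2 * Real.sin θ ^ 2))) k := key.2
  -- rewrite the value of the integral
  have hk0' : k ≠ 0 := hk0.ne'
  have hk1' : (1:ℝ) - k^2 ≠ 0 := by nlinarith
  have hval : (∫ θ in (0:ℝ)..(Real.pi/2), k * Real.sin θ ^ 2 /
        ((1 - k^2 * Real.sin θ ^ 2) * Real.sqrt (1 - k^2 * Real.sin θ ^ 2)))
      = (1/(k*(1-k^2))) * ellipticE k - (1/k) * ellipticK k := by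
    have hcongr : ∀ θ : ℝ, k * Real.sin θ ^ 2 /
          ((1 - k^2 * Real.sin θ ^ 2) * Real.sqrt (1 - k^2 * Real.sin θ ^ 2))
        = (-1/k) * (1 / Real.sqrt (1 - k^2 * Real.sin θ ^ 2))
          + (1/(k*(1-k^2))) * Real.sqrt (1 - k^2 * Real.sin θ ^ 2)
          + (-(k/(1-k^2))) *
            ((Real.cos θ ^ 2 - Real.sin θ ^ 2) / Real.sqrt (1 - k^2 * Real.sin θ ^ 2)
              + k^2 * Real.sin θ ^ 2 * Real.cos θ ^ 2 /
                ((1 - k^2 * Real.sin θ ^ 2) * Real.sqrt (1 - k^2 * Real.sin θ ^ 2))) := by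
      intro θ
      have hy : 0 < 1 - k^2 * Real.sin θ ^ 2 := ypos hksq θ
      have := key_id (s := Real.sin θ ^ 2) (r := Real.sqrt (1 - k^2 * Real.sin θ ^ 2))
        hk0' hk1' (Real.sqrt_pos.2 hy).ne' (Real.sq_sqrt hy.le)
      rw [this]
      rw [Real.cos_sq']
    rw [intervalIntegral.integral_congr (g := fun θ =>
      (-1/k) * (1 / Real.sqrt (1 - k^2 * Real.sin θ ^ 2))
          + (1/(k*(1-k^2))) * Real.sqrt (1 - k^2 * Real.sin θ ^ 2)
          + (-(k/(1-k^2))) *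
            ((Real.cos θ ^ 2 - Real.sin θ ^ 2) / Real.sqrt (1 - k^2 * Real.sin θ ^ 2)
              + k^2 * Real.sin θ ^ 2 * Real.cos θ ^ 2 /
                ((1 - k^2 * Real.sin θ ^ 2) * Real.sqrt (1 - k^2 * Real.sin θ ^ 2))))
      (fun θ _ => hcongr θ)]
    have i1 : IntervalIntegrable (fun θ : ℝ =>
        (-1/k) * (1 / Real.sqrt (1 - k^2 * Real.sin θ ^ 2))) MeasureTheory.volume 0 (Real.pi/2) :=
      (continuous_const.mul (cont_f1 hksq)).intervalIntegrable _ _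
    have i2 : IntervalIntegrable (fun θ : ℝ =>
        (1/(k*(1-k^2))) * Real.sqrt (1 - k^2 * Real.sin θ ^ 2)) MeasureTheory.volume 0 (Real.pi/2) :=
      (continuous_const.mul cont_sqrt_y).intervalIntegrable _ _
    have i3 : IntervalIntegrable (fun θ : ℝ =>
        (-(k/(1-k^2))) *
          ((Real.cos θ ^ 2 - Real.sin θ ^ 2) / Real.sqrt (1 - k^2 * Real.sin θ ^ 2)
            + k^2 * Real.sin θ ^ 2 * Real.cos θ ^ 2 /
              ((1 - k^2 * Real.sin θ ^ 2) * Real.sqrt (1 - k^2 * Real.sin θ ^ 2))))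
        MeasureTheory.volume 0 (Real.pi/2) :=
      (continuous_const.mul (cont_g' hksq)).intervalIntegrable _ _
    rw [intervalIntegral.integral_add (i1.add i2) i3, intervalIntegral.integral_add i1 i2]
    rw [intervalIntegral.integral_const_mul, intervalIntegral.integral_const_mul,
      intervalIntegral.integral_const_mul, integral_g' hksq]
    simp only [mul_zero, add_zero]
    rw [ellipticK, ellipticE]
    ring
  rw [hval] at hK
  exact hK


lemma ellipticK_pos {k : ℝ} (hk : k^2 < 1) : 0 < ellipticK k := by
  rw [ellipticK]
  apply intervalIntegral.intervalIntegral_pos_of_pos_on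
    ((cont_f1 hk).intervalIntegrable _ _)
  · intro θ _
    have := ypos hk θ
    positivity
  · positivity

lemma ellipticE_pos {k : ℝ} (hk : k^2 < 1) : 0 < ellipticE k := by
  rw [ellipticE]
  apply intervalIntegral.intervalIntegral_pos_of_pos_on
    (cont_sqrt_y.intervalIntegrable _ _)
  · intro θ _
    exact Real.sqrt_pos.2 (ypos hk θ)
  · positivity

lemma ellipticE_le_ellipticK {k : ℝ} (hk : k^2 < 1) : ellipticE k ≤ ellipticK k := by
  rw [ellipticK, ellipticE]
  apply intervalIntegral.integral_mono_on (by positivity)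
    (cont_sqrt_y.intervalIntegrable _ _) ((cont_f1 hk).intervalIntegrable _ _)
  intro θ _
  have hy : 0 < 1 - k^2 * Real.sin θ ^ 2 := ypos hk θ
  have hy1 : 1 - k^2 * Real.sin θ ^ 2 ≤ 1 := by nlinarith [sq_nonneg (k * Real.sin θ), sq_nonneg k, sq_nonneg (Real.sin θ), mul_nonneg (sq_nonneg k) (sq_nonneg (Real.sin θ))]
  have h1 : Real.sqrt (1 - k^2 * Real.sin θ ^ 2) ≤ 1 := Real.sqrt_le_one.2 hy1
  have h2 : 0 < Real.sqrt (1 - k^2 * Real.sin θ ^ 2) := Real.sqrt_pos.2 hy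
  calc Real.sqrt (1 - k^2 * Real.sin θ ^ 2) ≤ 1 := h1
    _ ≤ 1 / Real.sqrt (1 - k^2 * Real.sin θ ^ 2) := by
        rw [le_div_iff₀ h2]; nlinarith

theorem cnoidal_speed_monotone :
    ∀ k ∈ Set.Ioo (0:ℝ) 1, ∃ d : ℝ,
      HasDerivAt (fun k => (4 / Real.pi ^ 2) * ellipticK k ^ 2 * (2 * k^2 - 1)) d k ∧
      Real.pi ^ 2 / 8 * d =
        (ellipticK k / (k * (1 - k^2))) *
          ((1 - k^2) * (ellipticK k - ellipticE k) + k^2 * ellipticE k) ∧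
      0 < d := by
  rintro k ⟨hk0, hk1⟩
  have hksq : k^2 < 1 := by nlinarith
  have hπ : Real.pi ≠ 0 := Real.pi_ne_zero
  set K := ellipticK k with hK
  set E := ellipticE k with hE
  have hK' : HasDerivAt ellipticK ((1/(k*(1-k^2))) * E - (1/k) * K) k :=
    hasDerivAt_ellipticK hk0 hk1
  set K' : ℝ := (1/(k*(1-k^2))) * E - (1/k) * K with hK'def
  set d : ℝ := (4 / Real.pi ^ 2) * (2 * K * K') * (2 * k^2 - 1)
    + (4 / Real.pi ^ 2) * K^2 * (4 * k) with hd
  refine ⟨d, ?_, ?_, ?_⟩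
  · have h1 : HasDerivAt (fun x => (4 / Real.pi ^ 2) * ellipticK x ^ 2) ((4 / Real.pi ^ 2) * (2 * K * K')) k := by
      have h := (hK'.pow 2).const_mul (4 / Real.pi ^ 2)
      have heq : (4 / Real.pi ^ 2) * ((2:ℕ) * K ^ (2-1) * K') = (4 / Real.pi ^ 2) * (2 * K * K') := by
        push_cast; ring
      rw [heq] at h
      exact h
    have h2 : HasDerivAt (fun x : ℝ => 2 * x^2 - 1) (4 * k) k := by
      have h := ((hasDerivAt_pow 2 k).const_mul (2:ℝ)).sub_const 1
      have heq : (2:ℝ) * ((2:ℕ) * k ^ (2-1)) = 4 * k := by push_cast; ring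
      rw [heq] at h
      exact h
    exact h1.mul h2
  · rw [hd, hK'def]
    have hk0' : k ≠ 0 := hk0.ne'
    have hk1' : (1:ℝ) - k^2 ≠ 0 := by nlinarith
    field_simp
    ring
  · have hKpos : 0 < K := ellipticK_pos hksq
    have hEpos : 0 < E := ellipticE_pos hksq
    have hKE : E ≤ K := ellipticE_le_ellipticK hksq
    have hfac : 0 < (K / (k * (1 - k^2))) *
        ((1 - k^2) * (K - E) + k^2 * E) := by
      apply mul_pos
      · apply div_pos hKpos
        apply mul_pos hk0
        nlinarith
      · have h1 : 0 ≤ (1 - k^2) * (K - E) := by nlinarith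
        have h2 : 0 < k^2 * E := by positivity
        linarith
    have hd8 : 0 < Real.pi ^ 2 / 8 * d := by
      rw [hd, hK'def]
      calc (0:ℝ) < (K / (k * (1 - k^2))) * ((1 - k^2) * (K - E) + k^2 * E) := hfac
        _ = Real.pi ^ 2 / 8 * ((4 / Real.pi ^ 2) * (2 * K * ((1/(k*(1-k^2))) * E - (1/k) * K)) * (2 * k^2 - 1)
            + (4 / Real.pi ^ 2) * K^2 * (4 * k)) := by
          have hk0' : k ≠ 0 := hk0.ne'
          have hk1' : (1:ℝ) - k^2 ≠ 0 := by nlinarith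
          field_simp
          ring
    by_contra hdle
    push_neg at hdle
    have hπ2 : (0:ℝ) < Real.pi ^ 2 / 8 := by positivity
    have : Real.pi ^ 2 / 8 * d ≤ 0 := mul_nonpos_of_nonneg_of_nonpos hπ2.le hdle
    linarith
end

section
/- For k ∈ (0,1), the function k ↦ (1/π^2) K(k)^2 (2 - k^2) is strictly increasing, with derivative equal to (2/π^2) · (K(k)/(k(1-k^2))) · [(2-k^2)E(k) - 2(1-k^2)K(k)] > 0. -/
open Real

namespace DnAux

noncomputable def Jint (k : ℝ) : ℝ :=
  ∫ θ in (0:ℝ)..(Real.pi/2), Real.sin θ^2 / (Real.sqrt (1 - k^2 * Real.sin θ^2))^3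

noncomputable def Qint (k : ℝ) : ℝ :=
  ∫ θ in (0:ℝ)..(Real.pi/2), Real.sin θ^4 / (Real.sqrt (1 - k^2 * Real.sin θ^2))^3

lemma upos {k : ℝ} (hk : k^2 < 1) (θ : ℝ) : 0 < 1 - k^2 * Real.sin θ^2 := by
  nlinarith [Real.sin_sq_le_one θ, sq_nonneg k, sq_nonneg (Real.sin θ), sq_nonneg (k * Real.sin θ)]

lemma rpos {k : ℝ} (hk : k^2 < 1) (θ : ℝ) : 0 < Real.sqrt (1 - k^2 * Real.sin θ^2) :=
  Real.sqrt_pos.2 (upos hk θ)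

lemma rsq {k : ℝ} (hk : k^2 < 1) (θ : ℝ) :
    Real.sqrt (1 - k^2 * Real.sin θ^2) ^ 2 = 1 - k^2 * Real.sin θ^2 :=
  Real.sq_sqrt (upos hk θ).le

lemma contR (k : ℝ) : Continuous fun θ : ℝ => Real.sqrt (1 - k^2 * Real.sin θ^2) := by
  fun_prop

lemma II {k : ℝ} (hk : k^2 < 1) {p : ℝ → ℝ} (hp : Continuous p) (n : ℕ) :
    IntervalIntegrable (fun θ => p θ / (Real.sqrt (1 - k^2 * Real.sin θ^2))^n)
      MeasureTheory.volume 0 (Real.pi/2) :=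
  (hp.div ((contR k).pow n) (fun θ => pow_ne_zero _ (rpos hk θ).ne')).intervalIntegrable _ _

lemma hasDerivG {k : ℝ} (hk : k^2 < 1) (θ : ℝ) :
    HasDerivAt (fun t => -(Real.sin t * Real.cos t) / Real.sqrt (1 - k^2 * Real.sin t^2))
      ((1-k^2) * Real.sin θ^2 / (Real.sqrt (1 - k^2 * Real.sin θ^2))^3
        - Real.cos θ^2 / Real.sqrt (1 - k^2 * Real.sin θ^2)) θ := by
  have hw : HasDerivAt (fun t => 1 - k^2 * Real.sin t^2)
      (-(k^2 * (2 * Real.sin θ ^ 1 * Real.cos θ))) θ := by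
    simpa using (((Real.hasDerivAt_sin θ).pow 2).const_mul (k^2)).const_sub 1
  have hden : HasDerivAt (fun t => Real.sqrt (1 - k^2 * Real.sin t^2))
      (-(k^2 * (2 * Real.sin θ ^ 1 * Real.cos θ)) / (2 * Real.sqrt (1 - k^2 * Real.sin θ^2))) θ :=
    hw.sqrt (upos hk θ).ne'
  have hnum : HasDerivAt (fun t => -(Real.sin t * Real.cos t))
      (-(Real.cos θ * Real.cos θ + Real.sin θ * (-Real.sin θ))) θ :=
    ((Real.hasDerivAt_sin θ).mul (Real.hasDerivAt_cos θ)).neg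
  have h := hnum.div hden (rpos hk θ).ne'
  refine h.congr_deriv ?_
  symm
  have hr2 := rsq hk θ
  have hrne := (rpos hk θ).ne'
  set r := Real.sqrt (1 - k^2 * Real.sin θ^2) with hrdef
  have hsc : Real.sin θ^2 + Real.cos θ^2 = 1 := Real.sin_sq_add_cos_sq θ
  have hc2 : Real.cos θ^2 = 1 - Real.sin θ^2 := by nlinarith [hsc]
  field_simp
  ring_nf
  linear_combination (-(Real.sin θ^2)) * hr2 + k^2 * Real.sin θ^2 * hc2

lemma keyFTC {k : ℝ} (hk : k^2 < 1) :
    (∫ θ in (0:ℝ)..(Real.pi/2), Real.cos θ^2 / Real.sqrt (1 - k^2 * Real.sin θ^2))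
      = (1-k^2) * Jint k := by
  have hint1 : IntervalIntegrable
      (fun θ => (1-k^2) * Real.sin θ^2 / (Real.sqrt (1 - k^2 * Real.sin θ^2))^3)
      MeasureTheory.volume 0 (Real.pi/2) := II hk (by fun_prop) 3
  have hint2 : IntervalIntegrable
      (fun θ => Real.cos θ^2 / Real.sqrt (1 - k^2 * Real.sin θ^2))
      MeasureTheory.volume 0 (Real.pi/2) := by
    have := II hk (Real.continuous_cos.pow 2) 1
    simpa using this
  have h0 : (∫ θ in (0:ℝ)..(Real.pi/2),
      ((1-k^2) * Real.sin θ^2 / (Real.sqrt (1 - k^2 * Real.sin θ^2))^3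
        - Real.cos θ^2 / Real.sqrt (1 - k^2 * Real.sin θ^2))) = 0 := by
    rw [intervalIntegral.integral_eq_sub_of_hasDerivAt
      (fun θ _ => hasDerivG hk θ) (hint1.sub hint2)]
    simp [Real.cos_pi_div_two]
  rw [intervalIntegral.integral_sub hint1 hint2] at h0
  have hpull : (∫ θ in (0:ℝ)..(Real.pi/2),
      (1-k^2) * Real.sin θ^2 / (Real.sqrt (1 - k^2 * Real.sin θ^2))^3)
      = (1-k^2) * Jint k := by
    rw [Jint, ← intervalIntegral.integral_const_mul]
    congr 1; ext θ; ring
  rw [hpull] at h0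
  linarith

lemma hasDerivK {k : ℝ} (hk : k ∈ Set.Ioo (0:ℝ) 1) :
    HasDerivAt ellipticK (k * Jint k) k := by
  obtain ⟨hk0, hk1⟩ := hk
  have hk2 : k^2 < 1 := by nlinarith
  set b : ℝ := (1+k)/2 with hb
  have hb1 : b < 1 := by simp [hb]; linarith
  have hb0 : 0 < b := by positivity
  have hbsq : b^2 < 1 := by nlinarith
  set ε : ℝ := (1-k)/2 with hε
  have hεpos : 0 < ε := by simp [hε]; linarith
  have hball : ∀ x ∈ Metric.ball k ε, x^2 < b^2 := by
    intro x hx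
    rw [Metric.mem_ball, Real.dist_eq, abs_lt] at hx
    have : |x| < b := by rw [abs_lt]; constructor <;> [nlinarith; nlinarith]
    nlinarith [abs_nonneg x, sq_abs x]
  have key := intervalIntegral.hasDerivAt_integral_of_dominated_loc_of_deriv_le
    (F := fun x θ => 1 / Real.sqrt (1 - x^2 * Real.sin θ^2))
    (F' := fun x θ => x * Real.sin θ^2 / (Real.sqrt (1 - x^2 * Real.sin θ^2))^3)
    (x₀ := k) (a := 0) (b := Real.pi/2) (μ := MeasureTheory.volume)
    (bound := fun _ => b / (Real.sqrt (1 - b^2))^3) (Metric.ball_mem_nhds k hεpos)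
    ?_ ?_ ?_ ?_ ?_ ?_
  · have h2 := key.2
    have : (∫ θ in (0:ℝ)..(Real.pi/2),
        k * Real.sin θ^2 / (Real.sqrt (1 - k^2 * Real.sin θ^2))^3) = k * Jint k := by
      rw [Jint, ← intervalIntegral.integral_const_mul]
      congr 1; ext θ; ring
    rw [this] at h2
    exact h2
  · filter_upwards with x
    apply Measurable.aestronglyMeasurable
    apply Measurable.div measurable_const
    fun_prop
  · exact (continuous_const.div (contR k) (fun θ => (rpos hk2 θ).ne')).intervalIntegrable _ _
  · apply Continuous.aestronglyMeasurable
    exact (continuous_const.mul (Real.continuous_sin.pow 2)).div ((contR k).pow 3)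
      (fun θ => pow_ne_zero _ (rpos hk2 θ).ne')
  · filter_upwards with θ _ x hx
    have hx2 : x^2 < b^2 := hball x hx
    have hu : (0:ℝ) < 1 - x^2 * Real.sin θ^2 := by
      nlinarith [Real.sin_sq_le_one θ, sq_nonneg (Real.sin θ), sq_nonneg x]
    have hub : 1 - b^2 ≤ 1 - x^2 * Real.sin θ^2 := by
      nlinarith [Real.sin_sq_le_one θ, sq_nonneg (Real.sin θ), sq_nonneg x]
    have hsb : Real.sqrt (1 - b^2) ≤ Real.sqrt (1 - x^2 * Real.sin θ^2) :=
      Real.sqrt_le_sqrt hub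
    have hsbpos : 0 < Real.sqrt (1 - b^2) := Real.sqrt_pos.2 (by nlinarith)
    have hxb : |x| ≤ b := by nlinarith [abs_nonneg x, sq_abs x]
    rw [Real.norm_eq_abs, abs_div, abs_of_pos (pow_pos (Real.sqrt_pos.2 hu) 3)]
    apply div_le_div₀ hb0.le _ (pow_pos hsbpos 3) (pow_le_pow_left₀ hsbpos.le hsb 3)
    calc |x * Real.sin θ^2| = |x| * Real.sin θ^2 := by
          rw [abs_mul, abs_of_nonneg (sq_nonneg (Real.sin θ))]
      _ ≤ b * 1 := by
          apply mul_le_mul hxb (Real.sin_sq_le_one θ) (sq_nonneg _) hb0.le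
      _ = b := mul_one b
  · exact intervalIntegrable_const
  · filter_upwards with θ _ x hx
    have hx2 : x^2 < b^2 := hball x hx
    have hu : (0:ℝ) < 1 - x^2 * Real.sin θ^2 := by
      nlinarith [Real.sin_sq_le_one θ, sq_nonneg (Real.sin θ), sq_nonneg x]
    have hrx : 0 < Real.sqrt (1 - x^2 * Real.sin θ^2) := Real.sqrt_pos.2 hu
    have hw : HasDerivAt (fun y : ℝ => 1 - y^2 * Real.sin θ^2)
        (-(2 * x * Real.sin θ^2)) x := by
      have := ((hasDerivAt_pow 2 x).mul_const (Real.sin θ^2)).const_sub 1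
      simpa using this.congr_deriv (by ring)
    have hsq : HasDerivAt (fun y : ℝ => Real.sqrt (1 - y^2 * Real.sin θ^2))
        (-(2 * x * Real.sin θ^2) / (2 * Real.sqrt (1 - x^2 * Real.sin θ^2))) x :=
      hw.sqrt hu.ne'
    have hinv := hsq.inv hrx.ne'
    simp only [one_div]
    refine hinv.congr_deriv ?_
    symm
    have hr2 : Real.sqrt (1 - x^2 * Real.sin θ^2) ^ 2 = 1 - x^2 * Real.sin θ^2 :=
      Real.sq_sqrt hu.le
    field_simp

lemma identE {k : ℝ} (hk : k^2 < 1) :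
    ellipticE k - (1-k^2) * ellipticK k = k^2 * ((1-k^2) * Jint k) := by
  have hIE : IntervalIntegrable (fun θ => Real.sqrt (1 - k^2 * Real.sin θ^2))
      MeasureTheory.volume 0 (Real.pi/2) := (contR k).intervalIntegrable _ _
  have hIK : IntervalIntegrable (fun θ => (1-k^2) * (1 / Real.sqrt (1 - k^2 * Real.sin θ^2)))
      MeasureTheory.volume 0 (Real.pi/2) :=
    (continuous_const.mul (continuous_const.div (contR k)
      (fun θ => (rpos hk θ).ne'))).intervalIntegrable _ _
  have h1 : (1-k^2) * ellipticK k
      = ∫ θ in (0:ℝ)..(Real.pi/2), (1-k^2) * (1 / Real.sqrt (1 - k^2 * Real.sin θ^2)) := by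
    rw [ellipticK, ← intervalIntegral.integral_const_mul]
  rw [ellipticE, h1, ← intervalIntegral.integral_sub hIE hIK]
  have h2 : (∫ θ in (0:ℝ)..(Real.pi/2),
      (Real.sqrt (1 - k^2 * Real.sin θ^2)
        - (1-k^2) * (1 / Real.sqrt (1 - k^2 * Real.sin θ^2))))
      = ∫ θ in (0:ℝ)..(Real.pi/2),
        k^2 * (Real.cos θ^2 / Real.sqrt (1 - k^2 * Real.sin θ^2)) := by
    apply intervalIntegral.integral_congr
    intro θ _
    have hr2 := rsq hk θ
    have hrne := (rpos hk θ).ne'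
    have hc2 : Real.cos θ^2 = 1 - Real.sin θ^2 := by
      nlinarith [Real.sin_sq_add_cos_sq θ]
    field_simp [hc2]
    linear_combination hr2 - k^2 * hc2
  rw [h2, intervalIntegral.integral_const_mul, keyFTC hk]

lemma identP {k : ℝ} (hk : k^2 < 1) :
    (2-k^2) * ellipticE k - 2*(1-k^2) * ellipticK k = k^4 * ((1-k^2) * Qint k) := by
  have hIE : IntervalIntegrable (fun θ => (2-k^2) * Real.sqrt (1 - k^2 * Real.sin θ^2))
      MeasureTheory.volume 0 (Real.pi/2) := (continuous_const.mul (contR k)).intervalIntegrable _ _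
  have hIK : IntervalIntegrable
      (fun θ => 2*(1-k^2) * (1 / Real.sqrt (1 - k^2 * Real.sin θ^2)))
      MeasureTheory.volume 0 (Real.pi/2) :=
    (continuous_const.mul (continuous_const.div (contR k)
      (fun θ => (rpos hk θ).ne'))).intervalIntegrable _ _
  have h1 : (2-k^2) * ellipticE k
      = ∫ θ in (0:ℝ)..(Real.pi/2), (2-k^2) * Real.sqrt (1 - k^2 * Real.sin θ^2) := by
    rw [ellipticE, ← intervalIntegral.integral_const_mul]
  have h2 : 2*(1-k^2) * ellipticK k
      = ∫ θ in (0:ℝ)..(Real.pi/2), 2*(1-k^2) * (1 / Real.sqrt (1 - k^2 * Real.sin θ^2)) := by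
    rw [ellipticK, ← intervalIntegral.integral_const_mul]
  rw [h1, h2, ← intervalIntegral.integral_sub hIE hIK]
  have h3 : (∫ θ in (0:ℝ)..(Real.pi/2),
      ((2-k^2) * Real.sqrt (1 - k^2 * Real.sin θ^2)
        - 2*(1-k^2) * (1 / Real.sqrt (1 - k^2 * Real.sin θ^2))))
      = ∫ θ in (0:ℝ)..(Real.pi/2),
        (k^2 * (Real.cos θ^2 / Real.sqrt (1 - k^2 * Real.sin θ^2))
          - k^2*(1-k^2) * (Real.sin θ^2 / Real.sqrt (1 - k^2 * Real.sin θ^2))) := by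
    apply intervalIntegral.integral_congr
    intro θ _
    have hr2 := rsq hk θ
    have hrne := (rpos hk θ).ne'
    have hc2 : Real.cos θ^2 = 1 - Real.sin θ^2 := by
      nlinarith [Real.sin_sq_add_cos_sq θ]
    field_simp [hc2]
    linear_combination (2 - k^2) * hr2 - k^2 * hc2
  have hIc : IntervalIntegrable
      (fun θ => k^2 * (Real.cos θ^2 / Real.sqrt (1 - k^2 * Real.sin θ^2)))
      MeasureTheory.volume 0 (Real.pi/2) :=
    (continuous_const.mul ((Real.continuous_cos.pow 2).div (contR k)
      (fun θ => (rpos hk θ).ne'))).intervalIntegrable _ _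
  have hIs : IntervalIntegrable
      (fun θ => k^2*(1-k^2) * (Real.sin θ^2 / Real.sqrt (1 - k^2 * Real.sin θ^2)))
      MeasureTheory.volume 0 (Real.pi/2) :=
    (continuous_const.mul ((Real.continuous_sin.pow 2).div (contR k)
      (fun θ => (rpos hk θ).ne'))).intervalIntegrable _ _
  rw [h3, intervalIntegral.integral_sub hIc hIs,
    intervalIntegral.integral_const_mul, intervalIntegral.integral_const_mul, keyFTC hk]
  have h4 : (∫ θ in (0:ℝ)..(Real.pi/2),
      Real.sin θ^2 / Real.sqrt (1 - k^2 * Real.sin θ^2))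
      = Jint k - k^2 * Qint k := by
    have hIJ : IntervalIntegrable
        (fun θ => Real.sin θ^2 / (Real.sqrt (1 - k^2 * Real.sin θ^2))^3)
        MeasureTheory.volume 0 (Real.pi/2) := II hk (by fun_prop) 3
    have hIQ : IntervalIntegrable
        (fun θ => k^2 * (Real.sin θ^4 / (Real.sqrt (1 - k^2 * Real.sin θ^2))^3))
        MeasureTheory.volume 0 (Real.pi/2) :=
      (II hk ((Real.continuous_sin.pow 4)) 3).const_mul _
    rw [Jint, Qint, ← intervalIntegral.integral_const_mul,
      ← intervalIntegral.integral_sub hIJ hIQ]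
    apply intervalIntegral.integral_congr
    intro θ _
    have hr2 := rsq hk θ
    have hrne := (rpos hk θ).ne'
    beta_reduce
    generalize Real.sqrt (1 - k^2 * Real.sin θ^2) = r at hr2 hrne ⊢
    field_simp
    linear_combination Real.sin θ^2 * hr2
  rw [h4]
  ring

lemma Qpos {k : ℝ} (hk : k^2 < 1) : 0 < Qint k := by
  apply intervalIntegral.intervalIntegral_pos_of_pos_on (II hk (Real.continuous_sin.pow 4) 3)
  · intro θ hθ
    have hs : 0 < Real.sin θ := Real.sin_pos_of_pos_of_lt_pi hθ.1
      (lt_trans hθ.2 (by linarith [Real.pi_pos]))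
    exact div_pos (pow_pos hs 4) (pow_pos (rpos hk θ) 3)
  · linarith [Real.pi_pos]

lemma Kpos {k : ℝ} (hk : k^2 < 1) : 0 < ellipticK k := by
  apply intervalIntegral.intervalIntegral_pos_of_pos
    ((continuous_const.div (contR k) (fun θ => (rpos hk θ).ne')).intervalIntegrable _ _)
  · intro θ
    exact div_pos one_pos (rpos hk θ)
  · linarith [Real.pi_pos]

end DnAux

theorem dnoidal_speed_monotone :
    StrictMonoOn (fun k => (1 / Real.pi ^ 2) * ellipticK k ^ 2 * (2 - k^2)) (Set.Ioo 0 1) ∧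
    ∀ k ∈ Set.Ioo (0:ℝ) 1,
      HasDerivAt (fun k => (1 / Real.pi ^ 2) * ellipticK k ^ 2 * (2 - k^2))
        ((2 / Real.pi ^ 2) * (ellipticK k / (k * (1 - k^2))) *
          ((2 - k^2) * ellipticE k - 2 * (1 - k^2) * ellipticK k)) k ∧
      0 < (2 / Real.pi ^ 2) * (ellipticK k / (k * (1 - k^2))) *
          ((2 - k^2) * ellipticE k - 2 * (1 - k^2) * ellipticK k) := by
  have hder : ∀ k ∈ Set.Ioo (0:ℝ) 1,
      HasDerivAt (fun k => (1 / Real.pi ^ 2) * ellipticK k ^ 2 * (2 - k^2))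
        ((2 / Real.pi ^ 2) * (ellipticK k / (k * (1 - k^2))) *
          ((2 - k^2) * ellipticE k - 2 * (1 - k^2) * ellipticK k)) k := by
    intro k hk
    obtain ⟨hk0, hk1⟩ := hk
    have hk2 : k^2 < 1 := by nlinarith
    have hK := DnAux.hasDerivK ⟨hk0, hk1⟩
    have h2 : HasDerivAt (fun x : ℝ => 2 - x^2) (-(2*k)) k := by
      simpa using (hasDerivAt_pow 2 k).const_sub 2
    have h := ((hK.pow 2).const_mul (1/Real.pi^2)).mul h2
    refine h.congr_deriv ?_
    symm
    have hE := DnAux.identE hk2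
    have hπ : Real.pi ≠ 0 := Real.pi_ne_zero
    have hk0' : k ≠ 0 := hk0.ne'
    have h1k : (1:ℝ) - k^2 ≠ 0 := by nlinarith
    have hEeq : ellipticE k = (1-k^2)*ellipticK k + k^2*((1-k^2)*DnAux.Jint k) := by
      linarith
    simp only [Pi.pow_apply]
    rw [hEeq]
    push_cast
    field_simp
    ring
  have hpos : ∀ k ∈ Set.Ioo (0:ℝ) 1,
      0 < (2 / Real.pi ^ 2) * (ellipticK k / (k * (1 - k^2))) *
          ((2 - k^2) * ellipticE k - 2 * (1 - k^2) * ellipticK k) := by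
    intro k hk
    obtain ⟨hk0, hk1⟩ := hk
    have hk2 : k^2 < 1 := by nlinarith
    have hP := DnAux.identP hk2
    rw [hP]
    have h1 : (0:ℝ) < 2 / Real.pi ^ 2 := by positivity
    have h2 : 0 < ellipticK k / (k * (1 - k^2)) :=
      div_pos (DnAux.Kpos hk2) (by nlinarith)
    have h3 : 0 < k^4 * ((1-k^2) * DnAux.Qint k) := by
      have := DnAux.Qpos hk2
      have h4 : (0:ℝ) < 1 - k^2 := by nlinarith
      positivity
    exact mul_pos (mul_pos h1 h2) h3
  refine ⟨?_, fun k hk => ⟨hder k hk, hpos k hk⟩⟩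
  apply strictMonoOn_of_deriv_pos (convex_Ioo 0 1)
  · intro x hx
    exact (hder x hx).continuousAt.continuousWithinAt
  · intro x hx
    rw [interior_Ioo] at hx
    rw [(hder x hx).deriv]
    exact hpos x hx
end
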